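/- arXiv:1908.02424 — 2 statements merged into one kernel-verified Lean document; each statement's English description precedes it below -/
import Mathlib

section
/- Let R be a ring and m a two-sided ideal such that R is m-adically complete and R/m is left artinian. Then R is semiperfect, i.e., R/rad(R) is semisimple and idempotents lift modulo rad(R). -/
variable {R : Type*} [Ring R]

/-- The `n`-th power of a (two-sided) ideal of a possibly noncommutative ring. -/
def idealPow (m : Ideal R) : ℕ → Ideal R
  | 0 => ⊤
  | n + 1 => Ideal.span {x | ∃ a ∈ m, ∃ b ∈ idealPow m n, x = a * b}

/-- `R` is `m`-adically complete: `R → lim R/mⁱ` is bijective. -/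
def IsAdicCompleteRing (m : Ideal R) : Prop :=
  (∀ x : R, (∀ i, x ∈ idealPow m i) → x = 0) ∧
  (∀ a : ℕ → R, (∀ i, a (i + 1) - a i ∈ idealPow m i) →
    ∃ x : R, ∀ i, x - a i ∈ idealPow m i)

/-- The Jacobson radical of `R`. -/
noncomputable def radR (R : Type*) [Ring R] : Ideal R := Ideal.jacobson (⊥ : Ideal R)

/-- `R` is semiperfect: `R / rad R` is a semisimple ring and idempotents lift modulo `rad R`. -/
def IsSemiperfectRing (R : Type*) [Ring R] : Prop :=
  IsSemisimpleModule R (R ⧸ radR R) ∧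
  ∀ x : R, x * x - x ∈ radR R → ∃ e : R, IsIdempotentElem e ∧ e - x ∈ radR R

/-!
Completeness makes `1 - a` invertible for `a ∈ m` (geometric series), so `m ⊆ rad R`. Then
`R / rad R` is a quotient of the artinian module `R / m` and has zero radical, hence is
semisimple. An idempotent modulo `rad R` lifts first to `R / m`, whose radical `rad R / m` is
nilpotent, and then from `R / m` to `R` by the Newton iteration `y ↦ 3y² - 2y³`, which squares the
defect `y² - y` up to a factor and therefore converges `m`-adically.
-/

open Ideal Finset

theorem idealPow_eq_pow (m : Ideal R) [m.IsTwoSided] (n : ℕ) : idealPow m n = m ^ n := by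
  induction n with
  | zero => rw [Submodule.pow_zero, one_eq_top]; rfl
  | succ n ih =>
    rw [IsTwoSided.pow_succ, ← ih]
    refine le_antisymm (span_le.mpr ?_) (mul_le.mpr fun a ha b hb ↦ subset_span ⟨a, ha, b, hb, rfl⟩)
    rintro _ ⟨a, ha, b, hb, rfl⟩
    exact mul_mem_mul ha hb

namespace IsAdicCompleteRing

variable {m : Ideal R} [m.IsTwoSided]

theorem eq_of_forall_sub_mem_pow (hm : IsAdicCompleteRing m) {x y : R}
    (h : ∀ i, x - y ∈ m ^ i) : x = y :=
  sub_eq_zero.mp (hm.1 _ fun i ↦ idealPow_eq_pow m i ▸ h i)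

theorem exists_forall_sub_mem_pow (hm : IsAdicCompleteRing m) (a : ℕ → R)
    (ha : ∀ i, a (i + 1) - a i ∈ m ^ i) : ∃ x, ∀ i, x - a i ∈ m ^ i := by
  simpa only [idealPow_eq_pow] using hm.2 a (by simpa only [idealPow_eq_pow] using ha)

theorem exists_mul_one_sub_eq_one (hm : IsAdicCompleteRing m) {a : R} (ha : a ∈ m) :
    ∃ u, u * (1 - a) = 1 := by
  obtain ⟨u, hu⟩ := hm.exists_forall_sub_mem_pow (fun n ↦ ∑ i ∈ range n, a ^ i)
    fun i ↦ by simpa [sum_range_succ] using pow_mem_pow ha i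
  refine ⟨u, hm.eq_of_forall_sub_mem_pow fun i ↦ ?_⟩
  have : u * (1 - a) - 1 = (u - ∑ k ∈ range i, a ^ k) * (1 - a) - a ^ i := by
    rw [sub_mul, geom_sum_mul_neg]; abel
  rw [this]
  exact sub_mem (mul_mem_right _ _ (hu i)) (pow_mem_pow ha i)

theorem le_jacobson (hm : IsAdicCompleteRing m) : m ≤ Ring.jacobson R := by
  intro x hx
  rw [← jacobson_bot, mem_jacobson_iff]
  intro y
  obtain ⟨z, hz⟩ := hm.exists_mul_one_sub_eq_one (m.neg_mem (m.mul_mem_left y hx))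
  refine ⟨z, ?_⟩
  rw [mem_bot, ← hz]
  noncomm_ring

end IsAdicCompleteRing

def idempotentNewtonStep (y : R) : R := 3 * y ^ 2 - 2 * y ^ 3

theorem idempotentNewtonStep_mul_self_sub (y : R) :
    idempotentNewtonStep y * idempotentNewtonStep y - idempotentNewtonStep y =
      (4 * (y * y - y) - 3) * (y * y - y) * (y * y - y) := by
  unfold idempotentNewtonStep; noncomm_ring

theorem idempotentNewtonStep_sub (y : R) :
    idempotentNewtonStep y - y = (1 - 2 * y) * (y * y - y) := by
  unfold idempotentNewtonStep; noncomm_ring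

theorem idempotentNewtonStep_iterate_mul_self_sub_mem_pow {m : Ideal R} [m.IsTwoSided] {x : R}
    (hx : x * x - x ∈ m) (k : ℕ) :
    idempotentNewtonStep^[k] x * idempotentNewtonStep^[k] x - idempotentNewtonStep^[k] x ∈
      m ^ (k + 1) := by
  induction k with
  | zero => simpa [Submodule.pow_one] using hx
  | succ k ih =>
    rw [Function.iterate_succ_apply', idempotentNewtonStep_mul_self_sub, IsTwoSided.pow_succ]
    exact mul_mem_mul (mul_mem_left _ _ (pow_le_self k.succ_ne_zero ih)) ih

theorem IsAdicCompleteRing.exists_isIdempotentElem_sub_mem {m : Ideal R} [m.IsTwoSided]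
    (hm : IsAdicCompleteRing m) {x : R} (hx : x * x - x ∈ m) :
    ∃ e, IsIdempotentElem e ∧ e - x ∈ m := by
  set a : ℕ → R := fun k ↦ idempotentNewtonStep^[k] x
  have ha : ∀ k, a k * a k - a k ∈ m ^ (k + 1) :=
    idempotentNewtonStep_iterate_mul_self_sub_mem_pow hx
  have hstep : ∀ k, a (k + 1) - a k ∈ m ^ (k + 1) := fun k ↦ by
    simp only [a, Function.iterate_succ_apply', idempotentNewtonStep_sub]
    exact mul_mem_left _ _ (ha k)
  obtain ⟨e, he⟩ := hm.exists_forall_sub_mem_pow a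
    fun k ↦ pow_le_pow_right k.le_succ (hstep k)
  refine ⟨e, hm.eq_of_forall_sub_mem_pow fun k ↦ ?_, ?_⟩
  · have : e * e - e = (e - a k) * e + a k * (e - a k) - (e - a k) + (a k * a k - a k) := by
      noncomm_ring
    rw [this]
    exact add_mem (sub_mem (add_mem (mul_mem_right _ _ (he k)) (mul_mem_left _ _ (he k))) (he k))
      (pow_le_pow_right k.le_succ (ha k))
  · have : e - x = (e - a 1) + (a 1 - a 0) := by simp [a]
    rw [this]
    exact Submodule.pow_one m ▸ add_mem (he 1) (hstep 0)
theorem exists_isIdempotentElem_sub_mem_of_forall_isNilpotent {I : Ideal R} [I.IsTwoSided]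
    (hI : ∀ x ∈ I, IsNilpotent x) {x : R} (hx : x * x - x ∈ I) :
    ∃ e, IsIdempotentElem e ∧ e - x ∈ I := by
  have hker : RingHom.ker (Ideal.Quotient.mk I) = I := mk_ker
  obtain ⟨e, he, hex⟩ := exists_isIdempotentElem_eq_of_ker_isNilpotent (Ideal.Quotient.mk I)
    (fun y hy ↦ hI y (hker ▸ hy)) _ ⟨x, rfl⟩
    (by rw [IsIdempotentElem, ← map_mul, Ideal.Quotient.eq]; exact hx)
  exact ⟨e, he, Ideal.Quotient.eq.mp hex⟩

theorem IsArtinianRing.exists_isIdempotentElem_sub_mem_jacobson [IsArtinianRing R] {x : R}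
    (hx : x * x - x ∈ Ring.jacobson R) : ∃ e, IsIdempotentElem e ∧ e - x ∈ Ring.jacobson R := by
  obtain ⟨n, hn⟩ := IsArtinianRing.isNilpotent_jacobson_bot (R := R)
  rw [jacobson_bot] at hn
  exact exists_isIdempotentElem_sub_mem_of_forall_isNilpotent
    (fun y hy ↦ ⟨n, by simpa [hn] using pow_mem_pow hy n⟩) hx

theorem Ring.mk_mem_jacobson_quotient_iff {I : Ideal R} [I.IsTwoSided] (hI : I ≤ jacobson R)
    {x : R} : Ideal.Quotient.mk I x ∈ jacobson (R ⧸ I) ↔ x ∈ jacobson R := by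
  change _ ↔ x ∈ Module.jacobson R R
  rw [← Module.comap_jacobson_of_ker_le (f := (Ideal.Quotient.mk I).toSemilinearMap)
    Ideal.Quotient.mk_surjective (by rwa [← I.ker_mkQ] at hI), Submodule.mem_comap]
  rfl

theorem IsAdicCompleteRing.exists_isIdempotentElem_sub_mem_jacobson {m : Ideal R}
    [m.IsTwoSided] [IsArtinianRing (R ⧸ m)] (hm : IsAdicCompleteRing m) {x : R}
    (hx : x * x - x ∈ Ring.jacobson R) : ∃ e, IsIdempotentElem e ∧ e - x ∈ Ring.jacobson R := by
  have hle := hm.le_jacobson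
  obtain ⟨ē, hē, hēx⟩ := IsArtinianRing.exists_isIdempotentElem_sub_mem_jacobson
    (x := Ideal.Quotient.mk m x)
    (by rwa [← map_mul, ← map_sub, Ring.mk_mem_jacobson_quotient_iff hle])
  obtain ⟨y, rfl⟩ := Ideal.Quotient.mk_surjective ē
  obtain ⟨e, he, hey⟩ := hm.exists_isIdempotentElem_sub_mem (x := y)
    (Ideal.Quotient.eq.mp (by rw [map_mul]; exact hē))
  refine ⟨e, he, ?_⟩
  rw [← sub_add_sub_cancel e y x]
  exact add_mem (hle hey) ((Ring.mk_mem_jacobson_quotient_iff hle).mp (by rwa [map_sub]))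

theorem isSemisimpleModule_quotient_jacobson_of_le {M : Type*} [AddCommGroup M] [Module R M]
    {N : Submodule R M} [IsArtinian R (M ⧸ N)] (hN : N ≤ Module.jacobson R M) :
    IsSemisimpleModule R (M ⧸ Module.jacobson R M) :=
  have := isArtinian_of_surjective _ _ (Submodule.factor_surjective hN)
  (IsArtinian.isSemisimpleModule_iff_jacobson R _).mpr (Module.jacobson_quotient_jacobson R M)

/-- If `R` is `m`-adically complete for a two-sided ideal `m` and `R/m` is left artinian, then
`R` is semiperfect. -/
theorem semiperfect_of_complete (m : Ideal R)
    (htwoSided : ∀ a ∈ m, ∀ r : R, a * r ∈ m)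
    (hcomplete : IsAdicCompleteRing m)
    (hart : IsArtinian R (R ⧸ m)) :
    IsSemiperfectRing R := by
  have : m.IsTwoSided := ⟨fun r ha ↦ htwoSided _ ha r⟩
  have : IsArtinianRing (R ⧸ m) := isArtinian_of_tower R hart
  have hrad : radR R = Ring.jacobson R := jacobson_bot
  rw [IsSemiperfectRing, hrad]
  exact ⟨isSemisimpleModule_quotient_jacobson_of_le hcomplete.le_jacobson,
    fun x hx ↦ hcomplete.exists_isIdempotentElem_sub_mem_jacobson hx⟩
end

section
/- Let F : B → C be a full and essentially surjective additive functor between additive categories. If B is a Krull-Schmidt category, then C is also a Krull-Schmidt category. -/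
open CategoryTheory CategoryTheory.Limits

/-- An additive category is Krull-Schmidt if every object is isomorphic to a finite biproduct of
objects having local endomorphism rings. -/
def IsKrullSchmidtCat (C : Type*) [Category C] [Preadditive C] [HasFiniteBiproducts C] : Prop :=
  ∀ X : C, ∃ (n : ℕ) (f : Fin n → C) (_ : X ≅ ⨁ f), ∀ i, IsLocalRing (End (f i))

/-- A surjective image of a (possibly noncommutative) local ring is local,
provided it is nontrivial. -/
theorem isLocalRing_of_surjective' {R S : Type*} [Ring R] [Ring S] [IsLocalRing R]
    [Nontrivial S] (f : R →+* S) (hf : Function.Surjective f) : IsLocalRing S := by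
  constructor
  intro a b hab
  obtain ⟨x, rfl⟩ := hf a
  have hx : x + (1 - x) = 1 := by rw [add_sub_cancel]
  rcases IsLocalRing.isUnit_or_isUnit_of_add_one hx with h | h
  · exact Or.inl (h.map f)
  · right
    have hb : b = f (1 - x) := by
      rw [map_sub, map_one]
      exact eq_sub_of_add_eq' hab
    rw [hb]
    exact h.map f

/-- `F.map` as a ring hom on endomorphism rings, for an additive functor. -/
def mapEndRingHom {B C : Type*} [Category B] [Category C] [Preadditive B]
    [Preadditive C] (F : B ⥤ C) [F.Additive] (X : B) : End X →+* End (F.obj X) :=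
  { CategoryTheory.Functor.mapEnd X F with
    map_zero' := F.map_zero X X
    map_add' := fun _ _ => F.map_add }

/-- Dropping zero summands from a biproduct. -/
noncomputable def biproductIsoSubtype {C : Type*} [Category C] [Preadditive C]
    [HasFiniteBiproducts C] {J : Type} [Fintype J] (g : J → C) (p : J → Prop) [DecidablePred p]
    (h : ∀ i, ¬ p i → IsZero (g i)) : (⨁ g) ≅ ⨁ (fun j : {i // p i} => g j.1) where
  hom := biproduct.lift fun j => biproduct.π g j.1
  inv := biproduct.desc fun j => biproduct.ι g j.1
  hom_inv_id := by
    rw [biproduct.lift_desc, ← biproduct.total]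
    rw [← Finset.sum_filter_of_ne (p := p)
      (fun i _ hne => by
        by_contra hp
        exact hne (by
          calc biproduct.π g i ≫ biproduct.ι g i
              = biproduct.π g i ≫ (𝟙 (g i)) ≫ biproduct.ι g i := by simp
            _ = biproduct.π g i ≫ (0 : g i ⟶ g i) ≫ biproduct.ι g i := by
                rw [(h i hp).eq_of_src (𝟙 (g i)) 0]
            _ = 0 := by simp))]
    exact (Finset.sum_subtype (Finset.univ.filter p)
      (by simp) (fun i => biproduct.π g i ≫ biproduct.ι g i)).symm
  inv_hom_id := by
    ext j k
    simp only [Category.assoc, biproduct.lift_π, biproduct.ι_desc_assoc, Category.comp_id,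
      Category.id_comp]
    by_cases hjk : k = j
    · subst hjk; simp
    · rw [biproduct.ι_π_ne g (fun hh => hjk (Subtype.ext hh)), biproduct.ι_π_ne _ hjk]

/-- If `F : B → C` is a full, essentially surjective (dense) additive functor between additive
categories and `B` is Krull-Schmidt, then so is `C`. -/
theorem krullSchmidt_of_full_dense
    (B : Type*) [Category B] [Preadditive B] [HasFiniteBiproducts B]
    (C : Type*) [Category C] [Preadditive C] [HasFiniteBiproducts C]
    (F : B ⥤ C) [F.Additive] [F.Full] [F.EssSurj]
    (hB : IsKrullSchmidtCat B) : IsKrullSchmidtCat C := by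
  classical
  intro X
  obtain ⟨n, f, e, hloc⟩ := hB (F.objPreimage X)
  set g : Fin n → C := fun j => F.obj (f j) with hg
  set p : Fin n → Prop := fun j => ¬ IsZero (g j) with hp
  let e2 : Fin (Fintype.card {j // p j}) ≃ {j // p j} := (Fintype.equivFin _).symm
  refine ⟨Fintype.card {j // p j}, fun k => g (e2 k).1, ?_, ?_⟩
  · refine (F.objObjPreimageIso X).symm ≪≫ F.mapIso e ≪≫ Functor.mapBiproduct F f ≪≫
      biproductIsoSubtype g p (fun i hi => not_not.mp hi) ≪≫
      (biproduct.reindex e2 (fun j : {i // p i} => g j.1)).symm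
  · intro k
    have hnz : ¬ IsZero (g (e2 k).1) := (e2 k).2
    have : Nontrivial (End (g (e2 k).1)) := by
      refine ⟨𝟙 _, 0, fun hid => hnz ?_⟩
      rw [IsZero.iff_id_eq_zero]
      exact hid
    exact isLocalRing_of_surjective' (R := End (f (e2 k).1))
      (mapEndRingHom F (f (e2 k).1)) (fun y => F.map_surjective y)
end
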